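/- arXiv:2104.14009 — 6 statements merged into one kernel-verified Lean document; each statement's English description precedes it below -/
import Mathlib

section
/- Let f : ℤ × ℕ → ℝ be a strictly positive solution of the CRW-type discrete diffusion equation f_j^{n+1} = p(f_{j-1}^n + f_{j+1}^n) - (2p-1) f_j^{n-1}, and define u_j^n = f_{j+1}^n / f_j^n and v_j^n = f_j^{n+1} / f_j^n. Then for all j and all n ≥ 1: u_j^{n+1} = u_j^n · [p(u_{j+1}^n + 1/u_j^n) - (2p-1)/v_{j+1}^{n-1}] / [p(u_j^n + 1/u_{j-1}^n) - (2p-1)/v_j^{n-1}] and v_j^{n+1} = v_j^n · [p(u_j^{n+1} + 1/u_{j-1}^{n+1}) - (2p-1)/v_j^n] / [p(u_j^n + 1/u_{j-1}^n) - (2p-1)/v_j^{n-1}], provided all denominators are nonzero. -/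
/-! By the diffusion equation, each bracket of the Burgers equation equals the time ratio
`f_j^{n+2} / f_j^{n+1}`; both equations are then cancellations of such ratios. -/

theorem coleHopf_bracket_eq_ratio {p : ℝ} {f u v : ℤ → ℕ → ℝ}
    (hf0 : ∀ j n, f j n ≠ 0)
    (hf : ∀ (j : ℤ) (n : ℕ),
      f j (n + 2) = p * (f (j - 1) (n + 1) + f (j + 1) (n + 1)) - (2 * p - 1) * f j n)
    (hu : ∀ j n, u j n = f (j + 1) n / f j n) (hv : ∀ j n, v j n = f j (n + 1) / f j n)
    (j : ℤ) (n : ℕ) :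
    p * (u j (n + 1) + 1 / u (j - 1) (n + 1)) - (2 * p - 1) * (1 / v j n) =
      f j (n + 2) / f j (n + 1) := by
  rw [hu, hu, hv, hf j n, sub_add_cancel]
  field_simp [hf0]
  ring

/-- The discrete Cole–Hopf transformation u_j^n = f_{j+1}^n/f_j^n,
v_j^n = f_j^{n+1}/f_j^n of a positive solution of the CRW-type discrete
diffusion equation satisfies the CRW-type discrete Burgers equation. -/
theorem crw_discrete_cole_hopf (p : ℝ) (f : ℤ → ℕ → ℝ)
    (hfpos : ∀ (j : ℤ) (n : ℕ), 0 < f j n)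
    (hf : ∀ (j : ℤ) (n : ℕ),
      f j (n + 2) = p * (f (j - 1) (n + 1) + f (j + 1) (n + 1)) - (2 * p - 1) * f j n)
    (u v : ℤ → ℕ → ℝ)
    (hu : ∀ (j : ℤ) (n : ℕ), u j n = f (j + 1) n / f j n)
    (hv : ∀ (j : ℤ) (n : ℕ), v j n = f j (n + 1) / f j n) :
    ∀ (j : ℤ) (n : ℕ),
      (p * (u (j + 1) (n + 1) + 1 / u j (n + 1)) - (2 * p - 1) * (1 / v (j + 1) n) ≠ 0 →
       p * (u j (n + 1) + 1 / u (j - 1) (n + 1)) - (2 * p - 1) * (1 / v j n) ≠ 0 →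
        u j (n + 2) = u j (n + 1) *
          ((p * (u (j + 1) (n + 1) + 1 / u j (n + 1)) - (2 * p - 1) * (1 / v (j + 1) n)) /
           (p * (u j (n + 1) + 1 / u (j - 1) (n + 1)) - (2 * p - 1) * (1 / v j n)))) ∧
      (p * (u j (n + 2) + 1 / u (j - 1) (n + 2)) - (2 * p - 1) * (1 / v j (n + 1)) ≠ 0 →
       p * (u j (n + 1) + 1 / u (j - 1) (n + 1)) - (2 * p - 1) * (1 / v j n) ≠ 0 →
        v j (n + 2) = v j (n + 1) *
          ((p * (u j (n + 2) + 1 / u (j - 1) (n + 2)) - (2 * p - 1) * (1 / v j (n + 1))) /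
           (p * (u j (n + 1) + 1 / u (j - 1) (n + 1)) - (2 * p - 1) * (1 / v j n)))) := by
  have hf0 : ∀ j n, f j n ≠ 0 := fun j n => (hfpos j n).ne'
  have hB := coleHopf_bracket_eq_ratio hf0 hf hu hv
  intro j n
  have hB_succ := hB (j + 1) n
  rw [add_sub_cancel_right] at hB_succ
  refine ⟨fun _ _ => ?_, fun _ _ => ?_⟩
  · rw [hB_succ, hB j n, hu, hu]
    field_simp [hf0]
  · rw [hB j (n + 1), hB j n, hv, hv]
    field_simp [hf0]
end

section
/- Let F : ℤ × ℤ → ℝ satisfy the CRW-type ultradiscrete diffusion equation F_j^{n+1} = max(F_{j-1}^n, F_{j+1}^n, R + F_j^{n-1}) with R ∈ ℝ ∪ {-∞}, and define U_j^n := F_{j+1}^n - F_j^n + L/2 and V_j^n := F_j^{n+1} - F_j^n + L/2 for a constant L. Then U_j^{n+1} = U_j^n + min(U_{j-1}^n, L - U_j^n, V_j^{n-1} - R) - min(U_j^n, L - U_{j+1}^n, V_{j+1}^{n-1} - R) and V_j^{n+1} = V_j^n + min(U_{j-1}^n, L - U_j^n, V_j^{n-1} - R) - min(U_{j-1}^{n+1},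 L - U_j^{n+1}, V_j^n - R) for all j and n. -/
/-!
Since `L - V j n = (F j n + L / 2) - F j (n + 1)` and `F j (n + 1)` is a max of three terms, `L - V j n`
is the min of `F j n + L / 2` minus each of them, which are exactly `U (j - 1) n`, `L - U j n` and
`V j (n - 1) - R`. So every min in the Burgers equation is `L - V` at some site, and both equations
become telescoping identities in `F`.
-/

lemma sub_max_max {α : Type*} [AddCommGroup α] [LinearOrder α] [IsOrderedAddMonoid α]
    (c a b d : α) : c - max a (max b d) = min (c - a) (min (c - b) (c - d)) := by
  rw [← min_sub_sub_left, ← min_sub_sub_left]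

lemma crw_min_eq_sub_V (R L : ℝ) (F : ℤ → ℤ → ℝ)
    (hF : ∀ j n : ℤ, F j (n + 1) = max (F (j - 1) n) (max (F (j + 1) n) (R + F j (n - 1))))
    (U V : ℤ → ℤ → ℝ)
    (hU : ∀ j n : ℤ, U j n = F (j + 1) n - F j n + L / 2)
    (hV : ∀ j n : ℤ, V j n = F j (n + 1) - F j n + L / 2) (j n : ℤ) :
    min (U (j - 1) n) (min (L - U j n) (V j (n - 1) - R)) = L - V j n := by
  have hL : L - V j n = (F j n + L / 2) - F j (n + 1) := by rw [hV]; ring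
  rw [hL, hF, sub_max_max, hU, hU, hV, sub_add_cancel, sub_add_cancel]
  exact congrArg₂ min (by ring) (congrArg₂ min (by ring) (by ring))

/-- The CRW-type ultradiscrete Cole–Hopf transformation applied to the
CRW-type ultradiscrete diffusion equation yields the CRW-type ultradiscrete
Burgers equation. -/
theorem crw_ultradiscrete_cole_hopf (R L : ℝ) (F : ℤ → ℤ → ℝ)
    (hF : ∀ (j n : ℤ),
      F j (n + 1) = max (F (j - 1) n) (max (F (j + 1) n) (R + F j (n - 1))))
    (U V : ℤ → ℤ → ℝ)
    (hU : ∀ (j n : ℤ), U j n = F (j + 1) n - F j n + L / 2)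
    (hV : ∀ (j n : ℤ), V j n = F j (n + 1) - F j n + L / 2) :
    ∀ (j n : ℤ),
      U j (n + 1) = U j n
        + min (U (j - 1) n) (min (L - U j n) (V j (n - 1) - R))
        - min (U j n) (min (L - U (j + 1) n) (V (j + 1) (n - 1) - R)) ∧
      V j (n + 1) = V j n
        + min (U (j - 1) n) (min (L - U j n) (V j (n - 1) - R))
        - min (U (j - 1) (n + 1)) (min (L - U j (n + 1)) (V j n - R)) := by
  intro j n
  have flux := crw_min_eq_sub_V R L F hF U V hU hV
  have flux_right := flux (j + 1) n
  have flux_next := flux j (n + 1)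
  rw [add_sub_cancel_right] at flux_right flux_next
  rw [flux, flux_right, flux_next]
  constructor
  · rw [hU, hU, hV, hV]; ring
  · ring
end

section
/- Let U, Ṽ : ℤ × ℤ → ℝ satisfy U_j^{n+1} = U_j^n + min(U_{j-1}^n, L - U_j^n, Ṽ_j^{n-1}) - min(U_j^n, L - U_{j+1}^n, Ṽ_{j+1}^{n-1}) and Ṽ_j^{n+1} = Ṽ_j^n + min(U_{j-1}^n, L - U_j^n, Ṽ_j^{n-1}) - min(U_{j-1}^{n+1}, L - U_j^{n+1}, Ṽ_j^n) for n ≥ 0. If 0 ≤ U_j^0 ≤ L and 0 ≤ Ṽ_j^{-1} and 0 ≤ Ṽ_j^0 and Ṽ_j^{-1} + Ṽ_j^0 ≤ L for all j, then for all n ≥ 1 and all j it holds that 0 ≤ U_j^n ≤ L and 0 ≤ Ṽ_j^n ≤ L. -/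
/-!
Write `F j n = min (U (j-1) n) (min (L - U j n) (V j (n-1)))` for the flux into cell `j`
at time `n`. Then `U j (n+1) = U j n + F j n - F (j+1) n` and
`V j (n+1) + F j (n+1) = V j n + F j n`. By induction on `n ≥ 0`, all `U j n ∈ [0, L]`,
all `V j (n-1), V j n ≥ 0` and `V j n + F j n ≤ L`: the fluxes are then nonnegative, the
inflow `F j n ≤ L - U j n` and the outflow `F (j+1) n ≤ U j n` keep `U` in `[0, L]`, and the
conserved sum `V + F` keeps `V ≤ L`.
-/

namespace CrwUdBurgers

def flux (L : ℝ) (U V : ℤ → ℤ → ℝ) (j n : ℤ) : ℝ :=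
  min (U (j - 1) n) (min (L - U j n) (V j (n - 1)))

def Admissible (L : ℝ) (U V : ℤ → ℤ → ℝ) (n : ℤ) : Prop :=
  ∀ j, (0 ≤ U j n ∧ U j n ≤ L) ∧ 0 ≤ V j (n - 1) ∧ 0 ≤ V j n ∧ V j n + flux L U V j n ≤ L

section

variable {L : ℝ} {U V : ℤ → ℤ → ℝ}

theorem flux_le_left (j n : ℤ) : flux L U V j n ≤ U (j - 1) n :=
  min_le_left _ _

theorem flux_le_sub (j n : ℤ) : flux L U V j n ≤ L - U j n :=
  (min_le_right _ _).trans (min_le_left _ _)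

theorem flux_le_V (j n : ℤ) : flux L U V j n ≤ V j (n - 1) :=
  (min_le_right _ _).trans (min_le_right _ _)

theorem flux_nonneg {j n : ℤ} (hUl : 0 ≤ U (j - 1) n) (hUr : U j n ≤ L)
    (hV : 0 ≤ V j (n - 1)) : 0 ≤ flux L U V j n :=
  le_min hUl (le_min (sub_nonneg.mpr hUr) hV)

theorem Admissible.flux_nonneg {n : ℤ} (h : Admissible L U V n) (j : ℤ) :
    0 ≤ flux L U V j n :=
  CrwUdBurgers.flux_nonneg (h (j - 1)).1.1 (h j).1.2 (h j).2.1

theorem Admissible.V_le {n : ℤ} (h : Admissible L U V n) (j : ℤ) : V j n ≤ L := by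
  linarith [(h j).2.2.2, h.flux_nonneg j]

theorem admissible_zero (hU0 : ∀ j, 0 ≤ U j 0 ∧ U j 0 ≤ L) (hVm1 : ∀ j, 0 ≤ V j (-1))
    (hV0 : ∀ j, 0 ≤ V j 0) (hVsum : ∀ j, V j (-1) + V j 0 ≤ L) : Admissible L U V 0 := by
  intro j
  have hF : flux L U V j 0 ≤ V j (-1) := flux_le_V j 0
  exact ⟨hU0 j, hVm1 j, hV0 j, by linarith [hVsum j]⟩

theorem Admissible.U_succ_mem {j n : ℤ} (h : Admissible L U V n)
    (hU : U j (n + 1) = U j n + flux L U V j n - flux L U V (j + 1) n) :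
    0 ≤ U j (n + 1) ∧ U j (n + 1) ≤ L := by
  have hout : flux L U V (j + 1) n ≤ U j n := by
    simpa using flux_le_left (L := L) (U := U) (V := V) (j + 1) n
  constructor
  · linarith [h.flux_nonneg j]
  · linarith [flux_le_sub (L := L) (U := U) (V := V) j n, h.flux_nonneg (j + 1)]

theorem Admissible.succ {n : ℤ} (h : Admissible L U V n)
    (hU : ∀ j, U j (n + 1) = U j n + flux L U V j n - flux L U V (j + 1) n)
    (hV : ∀ j, V j (n + 1) = V j n + flux L U V j n - flux L U V j (n + 1)) :
    Admissible L U V (n + 1) := by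
  intro j
  have hF : flux L U V j (n + 1) ≤ V j n := by
    simpa using flux_le_V (L := L) (U := U) (V := V) j (n + 1)
  refine ⟨h.U_succ_mem (hU j), by simpa using (h j).2.2.1, ?_, ?_⟩
  · linarith [hV j, h.flux_nonneg j]
  · linarith [hV j, (h j).2.2.2]

theorem admissible_of_nonneg (h0 : Admissible L U V 0)
    (hU : ∀ j n, 0 ≤ n → U j (n + 1) = U j n + flux L U V j n - flux L U V (j + 1) n)
    (hV : ∀ j n, 0 ≤ n → V j (n + 1) = V j n + flux L U V j n - flux L U V j (n + 1))
    {n : ℤ} (hn : 0 ≤ n) : Admissible L U V n := by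
  induction n, hn using Int.leInduction with
  | base => exact h0
  | succ n hn ih => exact ih.succ (fun j => hU j n hn) (fun j => hV j n hn)

end

end CrwUdBurgers

open CrwUdBurgers in
/-- Theorem 1 of the paper: boundedness of the state variables of the
parameter-free CRW-type ultradiscrete Burgers equation. -/
theorem crw_ud_burgers_bounded (L : ℝ) (U V : ℤ → ℤ → ℝ)
    (hU : ∀ (j n : ℤ), 0 ≤ n →
      U j (n + 1) = U j n
        + min (U (j - 1) n) (min (L - U j n) (V j (n - 1)))
        - min (U j n) (min (L - U (j + 1) n) (V (j + 1) (n - 1))))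
    (hV : ∀ (j n : ℤ), 0 ≤ n →
      V j (n + 1) = V j n
        + min (U (j - 1) n) (min (L - U j n) (V j (n - 1)))
        - min (U (j - 1) (n + 1)) (min (L - U j (n + 1)) (V j n)))
    (hU0 : ∀ j : ℤ, 0 ≤ U j 0 ∧ U j 0 ≤ L)
    (hVm1 : ∀ j : ℤ, 0 ≤ V j (-1)) (hV0 : ∀ j : ℤ, 0 ≤ V j 0)
    (hVsum : ∀ j : ℤ, V j (-1) + V j 0 ≤ L) :
    ∀ (n : ℤ), 1 ≤ n → ∀ j : ℤ,
      (0 ≤ U j n ∧ U j n ≤ L) ∧ (0 ≤ V j n ∧ V j n ≤ L) := by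
  have hU' : ∀ j n, 0 ≤ n → U j (n + 1) = U j n + flux L U V j n - flux L U V (j + 1) n := by
    intro j n hn
    simpa [flux] using hU j n hn
  have hV' : ∀ j n, 0 ≤ n → V j (n + 1) = V j n + flux L U V j n - flux L U V j (n + 1) := by
    intro j n hn
    simpa [flux] using hV j n hn
  intro n hn j
  have h := admissible_of_nonneg (admissible_zero hU0 hVm1 hV0 hVsum) hU' hV' (by omega : 0 ≤ n)
  exact ⟨(h j).1, (h j).2.2.1, h.V_le j⟩
end

section
/- Let U, Ṽ satisfy the parameter-free CRW-type ultradiscrete Burgers equation with flux X_j^n := min(U_{j-1}^n, L - U_j^n, Ṽ_j^{n-1}). Then for all n ≥ 0 and all j, Ṽ_j^n = I_j^0 - X_j^n, where I_j^0 := min(U_{j-1}^0, L - U_j^0, Ṽ_j^{-1}) + Ṽ_j^0. In particular Ṽ_j^n is obtained by a telescoping sum from the second flux equation. -/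
theorem Int.eq_of_succ_eq_of_nonneg {α : Type*} {f : ℤ → α}
    (h : ∀ n, 0 ≤ n → f (n + 1) = f n) : ∀ n, 0 ≤ n → f n = f 0 :=
  Int.leInduction rfl fun n hn ih => (h n hn).trans ih

theorem crw_ud_burgers_telescoping_general (L : ℝ) (U V : ℤ → ℤ → ℝ)
    (hV : ∀ (j n : ℤ), 0 ≤ n →
      V j (n + 1) = V j n
        + min (U (j - 1) n) (min (L - U j n) (V j (n - 1)))
        - min (U (j - 1) (n + 1)) (min (L - U j (n + 1)) (V j n)))
    (X : ℤ → ℤ → ℝ)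
    (hX : ∀ (j n : ℤ), X j n = min (U (j - 1) n) (min (L - U j n) (V j (n - 1))))
    (I : ℤ → ℝ)
    (hI : ∀ j : ℤ, I j = min (U (j - 1) 0) (min (L - U j 0) (V j (-1))) + V j 0) :
    ∀ (j n : ℤ), 0 ≤ n → V j n = I j - X j n := by
  intro j n hn
  have hconserved : ∀ m, 0 ≤ m → V j (m + 1) + X j (m + 1) = V j m + X j m := by
    intro m hm
    rw [hV j m hm, hX j m, hX j (m + 1), add_sub_cancel_right]
    ring
  have hinitial : V j 0 + X j 0 = I j := by
    rw [hI, hX, zero_sub, add_comm]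
  linarith [Int.eq_of_succ_eq_of_nonneg (f := fun m => V j m + X j m) hconserved n hn]

/-- Telescoping identity: the maximum-inflow variable of the parameter-free
CRW-type ultradiscrete Burgers equation satisfies Ṽ_j^n = I_j^0 - X_j^n with
I_j^0 := min(U_{j-1}^0, L - U_j^0, Ṽ_j^{-1}) + Ṽ_j^0. -/
theorem crw_ud_burgers_telescoping (L : ℝ) (U V : ℤ → ℤ → ℝ)
    (hU : ∀ (j n : ℤ), 0 ≤ n →
      U j (n + 1) = U j n
        + min (U (j - 1) n) (min (L - U j n) (V j (n - 1)))
        - min (U j n) (min (L - U (j + 1) n) (V (j + 1) (n - 1))))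
    (hV : ∀ (j n : ℤ), 0 ≤ n →
      V j (n + 1) = V j n
        + min (U (j - 1) n) (min (L - U j n) (V j (n - 1)))
        - min (U (j - 1) (n + 1)) (min (L - U j (n + 1)) (V j n)))
    (X : ℤ → ℤ → ℝ)
    (hX : ∀ (j n : ℤ), X j n = min (U (j - 1) n) (min (L - U j n) (V j (n - 1))))
    (I : ℤ → ℝ)
    (hI : ∀ j : ℤ, I j = min (U (j - 1) 0) (min (L - U j 0) (V j (-1))) + V j 0) :
    ∀ (j n : ℤ), 0 ≤ n → V j n = I j - X j n :=
  crw_ud_burgers_telescoping_general L U V hV X hX I hI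
end

section
/- Let U, Ṽ satisfy the parameter-free CRW-type ultradiscrete Burgers equation. Assume 0 ≤ U_j^0 ≤ L, Ṽ_j^{-1} ≥ 0 and Ṽ_j^0 ≥ 0 for all j, and additionally Ṽ_j^{-1} + Ṽ_j^0 ≤ L for all j. Then for every n ≥ 1 and every j, 0 ≤ U_j^n ≤ L and 0 ≤ Ṽ_j^n ≤ I_j^0, where I_j^0 = min(U_{j-1}^0, L - U_j^0, Ṽ_j^{-1}) + Ṽ_j^0. -/
/-!
Write `F j n = min (U (j-1) n) (min (L - U j n) (V j (n-1)))` for the flux into cell `j` at time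
`n`. The scheme reads `U j (n+1) = U j n + F j n - F (j+1) n` and
`V j (n+1) = V j n + F j n - F j (n+1)`, so `V j n + F j n` is conserved in time and equals `I j`.
Each term of the minimum bounds the corresponding update, which keeps `0 ≤ U ≤ L` and `0 ≤ V`
by induction; then `F j n ≥ 0` and `V j n = I j - F j n ≤ I j`.
-/

def crwFlux (L : ℝ) (U V : ℤ → ℤ → ℝ) (j n : ℤ) : ℝ :=
  min (U (j - 1) n) (min (L - U j n) (V j (n - 1)))

section

variable {L : ℝ} {U V : ℤ → ℤ → ℝ}

lemma crwFlux_succ_left (j n : ℤ) :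
    crwFlux L U V (j + 1) n = min (U j n) (min (L - U (j + 1) n) (V (j + 1) (n - 1))) := by
  simp only [crwFlux, add_sub_cancel_right]

lemma crwFlux_succ_right (j n : ℤ) :
    crwFlux L U V j (n + 1) = min (U (j - 1) (n + 1)) (min (L - U j (n + 1)) (V j n)) := by
  simp only [crwFlux, add_sub_cancel_right]

lemma crwFlux_nonneg {j n : ℤ} (hU : 0 ≤ U (j - 1) n) (hUL : U j n ≤ L) (hV : 0 ≤ V j (n - 1)) :
    0 ≤ crwFlux L U V j n :=
  le_min hU (le_min (sub_nonneg.mpr hUL) hV)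

lemma crwFlux_succ_left_le (j n : ℤ) : crwFlux L U V (j + 1) n ≤ U j n :=
  (crwFlux_succ_left j n).trans_le (min_le_left _ _)

lemma crwFlux_le_sub (j n : ℤ) : crwFlux L U V j n ≤ L - U j n :=
  (min_le_right _ _).trans (min_le_left _ _)

lemma crwFlux_succ_right_le (j n : ℤ) : crwFlux L U V j (n + 1) ≤ V j n :=
  (crwFlux_succ_right j n).trans_le ((min_le_right _ _).trans (min_le_right _ _))

variable (hU : ∀ j n : ℤ, 0 ≤ n →
    U j (n + 1) = U j n + crwFlux L U V j n - crwFlux L U V (j + 1) n)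
  (hV : ∀ j n : ℤ, 0 ≤ n →
    V j (n + 1) = V j n + crwFlux L U V j n - crwFlux L U V j (n + 1))

include hV in
lemma add_crwFlux_eq_initial (j : ℤ) :
    ∀ n : ℤ, 0 ≤ n → V j n + crwFlux L U V j n = V j 0 + crwFlux L U V j 0 := by
  refine Int.leInduction rfl fun n hn ih => ?_
  rw [hV j n hn, ← ih]
  ring

include hU hV in
lemma crw_bounds (hU0 : ∀ j, 0 ≤ U j 0 ∧ U j 0 ≤ L) (hVm1 : ∀ j, 0 ≤ V j (-1))
    (hV0 : ∀ j, 0 ≤ V j 0) :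
    ∀ n : ℤ, 0 ≤ n → ∀ j,
      (0 ≤ U j n ∧ U j n ≤ L) ∧ 0 ≤ V j (n - 1) ∧ 0 ≤ V j n := by
  refine Int.leInduction (fun j => ⟨hU0 j, hVm1 j, hV0 j⟩) fun n hn ih j => ?_
  have hflux : ∀ i, 0 ≤ crwFlux L U V i n := fun i =>
    crwFlux_nonneg (ih (i - 1)).1.1 (ih i).1.2 (ih i).2.1
  refine ⟨⟨?_, ?_⟩, by simpa using (ih j).2.2, ?_⟩
  · linarith [hU j n hn, hflux j, crwFlux_succ_left_le (L := L) (U := U) (V := V) j n]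
  · linarith [hU j n hn, hflux (j + 1), crwFlux_le_sub (L := L) (U := U) (V := V) j n]
  · linarith [hV j n hn, hflux j, crwFlux_succ_right_le (L := L) (U := U) (V := V) j n]

end

theorem crw_ud_burgers_refined_bound_general (L : ℝ) (U V : ℤ → ℤ → ℝ)
    (hU : ∀ (j n : ℤ), 0 ≤ n →
      U j (n + 1) = U j n
        + min (U (j - 1) n) (min (L - U j n) (V j (n - 1)))
        - min (U j n) (min (L - U (j + 1) n) (V (j + 1) (n - 1))))
    (hV : ∀ (j n : ℤ), 0 ≤ n →
      V j (n + 1) = V j n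
        + min (U (j - 1) n) (min (L - U j n) (V j (n - 1)))
        - min (U (j - 1) (n + 1)) (min (L - U j (n + 1)) (V j n)))
    (hU0 : ∀ j : ℤ, 0 ≤ U j 0 ∧ U j 0 ≤ L)
    (hVm1 : ∀ j : ℤ, 0 ≤ V j (-1)) (hV0 : ∀ j : ℤ, 0 ≤ V j 0)
    (I : ℤ → ℝ)
    (hI : ∀ j : ℤ, I j = min (U (j - 1) 0) (min (L - U j 0) (V j (-1))) + V j 0) :
    ∀ (n : ℤ), 1 ≤ n → ∀ j : ℤ,
      (0 ≤ U j n ∧ U j n ≤ L) ∧ (0 ≤ V j n ∧ V j n ≤ I j) := by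
  have hU' : ∀ j n : ℤ, 0 ≤ n →
      U j (n + 1) = U j n + crwFlux L U V j n - crwFlux L U V (j + 1) n := by
    intro j n hn
    rw [crwFlux_succ_left]
    exact hU j n hn
  have hV' : ∀ j n : ℤ, 0 ≤ n →
      V j (n + 1) = V j n + crwFlux L U V j n - crwFlux L U V j (n + 1) := by
    intro j n hn
    rw [crwFlux_succ_right]
    exact hV j n hn
  intro n hn j
  have hn0 : 0 ≤ n := by lia
  have bounds := crw_bounds hU' hV' hU0 hVm1 hV0 n hn0
  have hflux : 0 ≤ crwFlux L U V j n :=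
    crwFlux_nonneg (bounds (j - 1)).1.1 (bounds j).1.2 (bounds j).2.1
  have hconserved := add_crwFlux_eq_initial hV' j n hn0
  have hI0 : I j = V j 0 + crwFlux L U V j 0 := by
    rw [hI j, crwFlux, zero_sub, add_comm]
  exact ⟨(bounds j).1, (bounds j).2.2, by linarith⟩

/-- Theorem 2 of the paper: refined upper bound Ṽ_j^n ≤ I_j^0 for the
maximum-inflow variable of the parameter-free CRW-type ultradiscrete Burgers
equation. -/
theorem crw_ud_burgers_refined_bound (L : ℝ) (U V : ℤ → ℤ → ℝ)
    (hU : ∀ (j n : ℤ), 0 ≤ n →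
      U j (n + 1) = U j n
        + min (U (j - 1) n) (min (L - U j n) (V j (n - 1)))
        - min (U j n) (min (L - U (j + 1) n) (V (j + 1) (n - 1))))
    (hV : ∀ (j n : ℤ), 0 ≤ n →
      V j (n + 1) = V j n
        + min (U (j - 1) n) (min (L - U j n) (V j (n - 1)))
        - min (U (j - 1) (n + 1)) (min (L - U j (n + 1)) (V j n)))
    (hU0 : ∀ j : ℤ, 0 ≤ U j 0 ∧ U j 0 ≤ L)
    (hVm1 : ∀ j : ℤ, 0 ≤ V j (-1)) (hV0 : ∀ j : ℤ, 0 ≤ V j 0)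
    (hVsum : ∀ j : ℤ, V j (-1) + V j 0 ≤ L)
    (I : ℤ → ℝ)
    (hI : ∀ j : ℤ, I j = min (U (j - 1) 0) (min (L - U j 0) (V j (-1))) + V j 0) :
    ∀ (n : ℤ), 1 ≤ n → ∀ j : ℤ,
      (0 ≤ U j n ∧ U j n ≤ L) ∧ (0 ≤ V j n ∧ V j n ≤ I j) :=
  crw_ud_burgers_refined_bound_general L U V hU hV hU0 hVm1 hV0 I hI
end

section
/- Suppose Ṽ_j^{-1} = 0 for all j in the parameter-free CRW-type ultradiscrete Burgers equation with 0 ≤ U_j^0 ≤ L and Ṽ_j^0 ≥ 0. Then I_j^0 = Ṽ_j^0 for all j, and hence 0 ≤ Ṽ_j^n ≤ Ṽ_j^0 for all n ≥ 1 and all j (assuming additionally Ṽ_j^0 ≤ L so that the hypotheses of the boundedness theorem hold). -/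
/-!
Writing `I j n = min (U (j-1) n) (min (L - U j n) (V j (n-1)))` for the inflow into site `j`,
both evolution equations are conservation laws: `U` moves by `I j n - I (j+1) n` and `V` by
`I j n - I j (n+1)`. Hence `V j n + I j n` is constant in time, and by induction on `n` the
occupations stay in `[0, L]` and the inflows stay nonnegative, so `0 ≤ V j n ≤ V j 0 + I j 0`.
When `V j (-1) = 0` the initial inflow `I j 0` vanishes.
-/

open Set

namespace UltradiscreteBurgers

def inflow (L : ℝ) (U V : ℤ → ℤ → ℝ) (j n : ℤ) : ℝ :=
  min (U (j - 1) n) (min (L - U j n) (V j (n - 1)))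

section

variable {L : ℝ} {U V : ℤ → ℤ → ℝ}

theorem inflow_le_U_pred (j n : ℤ) : inflow L U V j n ≤ U (j - 1) n :=
  min_le_left _ _

theorem inflow_le_L_sub_U (j n : ℤ) : inflow L U V j n ≤ L - U j n :=
  (min_le_right _ _).trans (min_le_left _ _)

theorem inflow_le_V_pred (j n : ℤ) : inflow L U V j n ≤ V j (n - 1) :=
  (min_le_right _ _).trans (min_le_right _ _)

theorem inflow_nonneg {j n : ℤ} (hUpred : 0 ≤ U (j - 1) n) (hU : U j n ≤ L)
    (hV : 0 ≤ V j (n - 1)) : 0 ≤ inflow L U V j n :=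
  le_min hUpred (le_min (sub_nonneg.mpr hU) hV)

theorem inflow_eq_zero {j n : ℤ} (hUpred : 0 ≤ U (j - 1) n) (hU : U j n ≤ L)
    (hV : V j (n - 1) = 0) : inflow L U V j n = 0 := by
  rw [inflow, hV, min_eq_right (sub_nonneg.mpr hU), min_eq_right hUpred]

theorem V_add_inflow_eq
    (hV : ∀ j n, 0 ≤ n → V j (n + 1) = V j n + inflow L U V j n - inflow L U V j (n + 1))
    (j : ℤ) {n : ℤ} (hn : 0 ≤ n) :
    V j n + inflow L U V j n = V j 0 + inflow L U V j 0 := by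
  induction n, hn using Int.leInduction with
  | base => rfl
  | succ n hn ih => rw [hV j n hn]; linarith

theorem U_succ_mem_Icc
    (hU : ∀ j n, 0 ≤ n → U j (n + 1) = U j n + inflow L U V j n - inflow L U V (j + 1) n)
    {n : ℤ} (hn : 0 ≤ n) (hUn : ∀ j, U j n ∈ Icc 0 L) (hVpred : ∀ j, 0 ≤ V j (n - 1))
    (j : ℤ) : U j (n + 1) ∈ Icc 0 L := by
  have hin : 0 ≤ inflow L U V j n := inflow_nonneg (hUn (j - 1)).1 (hUn j).2 (hVpred j)
  have hout : 0 ≤ inflow L U V (j + 1) n :=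
    inflow_nonneg (hUn (j + 1 - 1)).1 (hUn (j + 1)).2 (hVpred (j + 1))
  have hout_le : inflow L U V (j + 1) n ≤ U j n := by
    simpa using inflow_le_U_pred (L := L) (U := U) (V := V) (j + 1) n
  have hin_le : inflow L U V j n ≤ L - U j n := inflow_le_L_sub_U j n
  rw [hU j n hn]
  constructor <;> linarith

variable
    (hU : ∀ j n, 0 ≤ n → U j (n + 1) = U j n + inflow L U V j n - inflow L U V (j + 1) n)
    (hV : ∀ j n, 0 ≤ n → V j (n + 1) = V j n + inflow L U V j n - inflow L U V j (n + 1))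
    (hU0 : ∀ j, U j 0 ∈ Icc 0 L) (hVm1 : ∀ j, 0 ≤ V j (-1)) (hV0 : ∀ j, 0 ≤ V j 0)
include hU hV hU0 hVm1 hV0

/-- `V j (n+1) ≥ I j n ≥ 0` because the inflow `I j (n+1)` cannot exceed `V j n`. -/
theorem U_mem_Icc_and_V_nonneg {n : ℤ} (hn : 0 ≤ n) :
    (∀ j, U j n ∈ Icc 0 L) ∧ (∀ j, 0 ≤ V j (n - 1)) ∧ (∀ j, 0 ≤ V j n) := by
  induction n, hn using Int.leInduction with
  | base => exact ⟨hU0, hVm1, hV0⟩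
  | succ n hn ih =>
    obtain ⟨hUn, hVpred, hVn⟩ := ih
    refine ⟨U_succ_mem_Icc hU hn hUn hVpred, by simpa using hVn, fun j => ?_⟩
    have hin : 0 ≤ inflow L U V j n := inflow_nonneg (hUn (j - 1)).1 (hUn j).2 (hVpred j)
    have hnext : inflow L U V j (n + 1) ≤ V j n := by
      simpa using inflow_le_V_pred (L := L) (U := U) (V := V) j (n + 1)
    rw [hV j n hn]
    linarith

theorem V_mem_Icc {n : ℤ} (hn : 0 ≤ n) (j : ℤ) :
    V j n ∈ Icc 0 (V j 0 + inflow L U V j 0) := by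
  obtain ⟨hUn, hVpred, hVn⟩ := U_mem_Icc_and_V_nonneg hU hV hU0 hVm1 hV0 hn
  have hin : 0 ≤ inflow L U V j n := inflow_nonneg (hUn (j - 1)).1 (hUn j).2 (hVpred j)
  have := V_add_inflow_eq hV j hn
  exact ⟨hVn j, by linarith⟩

end

end UltradiscreteBurgers

open UltradiscreteBurgers in
/-- Specialization of Theorem 2: if Ṽ_j^{-1} = 0 for all j, then
I_j^0 = Ṽ_j^0, so the initial values Ṽ_j^0 bound the maximum inflow for all
later times: 0 ≤ Ṽ_j^n ≤ Ṽ_j^0 for all n ≥ 1. -/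
theorem crw_ud_burgers_controller (L : ℝ) (U V : ℤ → ℤ → ℝ)
    (hU : ∀ (j n : ℤ), 0 ≤ n →
      U j (n + 1) = U j n
        + min (U (j - 1) n) (min (L - U j n) (V j (n - 1)))
        - min (U j n) (min (L - U (j + 1) n) (V (j + 1) (n - 1))))
    (hV : ∀ (j n : ℤ), 0 ≤ n →
      V j (n + 1) = V j n
        + min (U (j - 1) n) (min (L - U j n) (V j (n - 1)))
        - min (U (j - 1) (n + 1)) (min (L - U j (n + 1)) (V j n)))
    (hU0 : ∀ j : ℤ, 0 ≤ U j 0 ∧ U j 0 ≤ L)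
    (hVm1 : ∀ j : ℤ, V j (-1) = 0)
    (hV0 : ∀ j : ℤ, 0 ≤ V j 0 ∧ V j 0 ≤ L) :
    (∀ j : ℤ, min (U (j - 1) 0) (min (L - U j 0) (V j (-1))) + V j 0 = V j 0) ∧
    (∀ (n : ℤ), 1 ≤ n → ∀ j : ℤ, 0 ≤ V j n ∧ V j n ≤ V j 0) := by
  have hU' : ∀ j n, 0 ≤ n → U j (n + 1) = U j n + inflow L U V j n - inflow L U V (j + 1) n :=
    fun j n hn => by simpa [inflow] using hU j n hn
  have hV' : ∀ j n, 0 ≤ n → V j (n + 1) = V j n + inflow L U V j n - inflow L U V j (n + 1) :=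
    fun j n hn => by simpa [inflow] using hV j n hn
  have hI0 : ∀ j, inflow L U V j 0 = 0 := fun j =>
    inflow_eq_zero (hU0 (j - 1)).1 (hU0 j).2 (by simpa using hVm1 j)
  refine ⟨fun j => by simpa [inflow] using hI0 j, fun n hn j => ?_⟩
  simpa [hI0] using
    V_mem_Icc hU' hV' hU0 (fun j => (hVm1 j).ge) (fun j => (hV0 j).1) (by omega : 0 ≤ n) j
end
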